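/- Let C be a Cartan scheme and R a root system of type C. If a ∈ A and i ≠ j in I satisfy c^a_{ij} = 0, then c^a_{jl} = c^{ρ_i(a)}_{jl} for all l ∈ I. -/
import Mathlib


/-- The standard basis vector `α i` of `ℤ^I`. -/
def alphaV {I : Type*} [DecidableEq I] (i : I) : I → ℤ := fun j => if j = i then 1 else 0

/-- The reflection `σ_i^a` on `ℤ^I`, determined by `σ_i^a(α_j) = α_j - c^a_{ij} α_i`. -/
def reflMap {I A : Type*} [DecidableEq I] [Fintype I] (c : A → I → I → ℤ) (a : A) (i : I)
    (v : I → ℤ) : I → ℤ :=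
  v - (∑ j, c a i j * v j) • alphaV i

/-- The set `R^a ∩ (ℕ_0 α_i + ℕ_0 α_j)`. -/
def coneIJ {I : Type*} [DecidableEq I] (R : Set (I → ℤ)) (i j : I) : Set (I → ℤ) :=
  R ∩ {v | ∃ p q : ℕ, v = (p : ℤ) • alphaV i + (q : ℤ) • alphaV j}

/-- Axioms (R1)–(R4) of a root system of type `𝒞`. -/
structure IsRootSystem {I A : Type*} [DecidableEq I] [Fintype I]
    (ρ : I → A → A) (c : A → I → I → ℤ) (R : A → Set (I → ℤ)) : Prop where
  R1 : ∀ a, R a = {v ∈ R a | ∀ i, 0 ≤ v i} ∪ -{v ∈ R a | ∀ i, 0 ≤ v i}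
  R2 : ∀ a i, R a ∩ {v | ∃ z : ℤ, v = z • alphaV i} = {alphaV i, -alphaV i}
  R3 : ∀ a i, (reflMap c a i) '' R a = R (ρ i a)
  R4 : ∀ a i j, i ≠ j → (coneIJ (R a) i j).Finite →
      ((ρ i ∘ ρ j)^[(coneIJ (R a) i j).ncard] a) = a

/-- Axioms of a Cartan scheme: `(C1)`, `(C2)` and generalized Cartan matrices. -/
structure IsCartanScheme {I A : Type*} (ρ : I → A → A) (c : A → I → I → ℤ) : Prop where
  C1 : ∀ i a, ρ i (ρ i a) = a
  M1diag : ∀ a i, c a i i = 2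
  M1off : ∀ a i j, i ≠ j → c a i j ≤ 0
  M2 : ∀ a i j, c a i j = 0 → c a j i = 0
  C2 : ∀ a i j, c a i j = c (ρ i a) i j

section aux
variable {I A : Type*} [DecidableEq I] [Fintype I]

lemma sum_row (g : I → ℤ) (x y z : ℤ) (p q r : I) :
    ∑ m, g m * (x * alphaV p m + y * alphaV q m + z * alphaV r m)
      = x * g p + y * g q + z * g r := by
  simp [alphaV, mul_add, mul_ite, Finset.sum_add_distrib, mul_comm]

lemma reflMap_mid (c : A → I → I → ℤ) (a : A) (i : I) (x y z : ℤ) (p r : I) :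
    reflMap c a i (fun k => x * alphaV p k + y * alphaV i k + z * alphaV r k)
      = fun k => x * alphaV p k
          + (y - (x * c a i p + y * c a i i + z * c a i r)) * alphaV i k
          + z * alphaV r k := by
  funext k
  simp only [reflMap, Pi.sub_apply, Pi.smul_apply, smul_eq_mul]
  rw [sum_row]
  ring

lemma reflMap_last (c : A → I → I → ℤ) (a : A) (j : I) (x y z : ℤ) (p q : I) :
    reflMap c a j (fun k => x * alphaV p k + y * alphaV q k + z * alphaV j k)
      = fun k => x * alphaV p k + y * alphaV q k
          + (z - (x * c a j p + y * c a j q + z * c a j j)) * alphaV j k := by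
  funext k
  simp only [reflMap, Pi.sub_apply, Pi.smul_apply, smul_eq_mul]
  rw [sum_row]
  ring

variable {ρ : I → A → A} {c : A → I → I → ℤ} {R : A → Set (I → ℤ)}

lemma mem_refl (hRS : IsRootSystem ρ c R) {a : A} {v : I → ℤ} (hv : v ∈ R a) (i : I) :
    reflMap c a i v ∈ R (ρ i a) := by
  rw [← hRS.R3 a i]; exact ⟨v, hv, rfl⟩

lemma alphaV_mem (hRS : IsRootSystem ρ c R) (a : A) (l : I) : alphaV l ∈ R a := by
  have h : alphaV l ∈ R a ∩ {v | ∃ z : ℤ, v = z • alphaV l} := by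
    rw [hRS.R2 a l]; left; rfl
  exact h.1

lemma pos_all (hRS : IsRootSystem ρ c R) {a : A} {v : I → ℤ} (hv : v ∈ R a)
    {l : I} (hl : 0 < v l) (k : I) : 0 ≤ v k := by
  rw [hRS.R1 a] at hv
  rcases hv with h | h
  · exact h.2 k
  · rw [Set.mem_neg] at h
    have := h.2 l
    simp only [Pi.neg_apply] at this
    omega

/-- The key commutation relation obtained from (R4). -/
lemma rel_of_c0 (hCS : IsCartanScheme ρ c) (hRS : IsRootSystem ρ c R)
    (a : A) (i j : I) (hij : i ≠ j) (hji : c a j i = 0) :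
    ρ i (ρ j (ρ i a)) = ρ j a := by
  have haij : alphaV i ≠ alphaV j := by
    intro h
    have := congrFun h i
    simp [alphaV, hij, hij.symm] at this
  have hcone : coneIJ (R a) j i = {alphaV j, alphaV i} := by
    ext v
    constructor
    · rintro ⟨hvR, p, q, rfl⟩
      set v : I → ℤ := (p : ℤ) • alphaV j + (q : ℤ) • alphaV i with hvdef
      have hv' : v = fun k => 0 * alphaV i k + (p : ℤ) * alphaV j k + (q : ℤ) * alphaV i k := by
        funext k; simp [hvdef]
      rcases Nat.eq_zero_or_pos p with hp | hp
      · -- v = q • alphaV i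
        have hsp : v ∈ R a ∩ {w | ∃ z : ℤ, w = z • alphaV i} := by
          refine ⟨hvR, ⟨(q : ℤ), ?_⟩⟩
          funext k; simp [hvdef, hp]
        rw [hRS.R2 a i] at hsp
        rcases hsp with h | h
        · right; exact h
        · exfalso
          have := congrFun h i
          simp [hvdef, alphaV, hp, hij.symm] at this
      rcases Nat.eq_zero_or_pos q with hq | hq
      · have hsp : v ∈ R a ∩ {w | ∃ z : ℤ, w = z • alphaV j} := by
          refine ⟨hvR, ⟨(p : ℤ), ?_⟩⟩
          funext k; simp [hvdef, hq]
        rw [hRS.R2 a j] at hsp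
        rcases hsp with h | h
        · left; exact h
        · exfalso
          have := congrFun h j
          simp [hvdef, alphaV, hq, hij] at this
      · exfalso
        have hw : reflMap c a j v ∈ R (ρ j a) := mem_refl hRS hvR j
        rw [hv', reflMap_mid c a j 0 (p : ℤ) (q : ℤ) i i] at hw
        have hwi : (0 : ℤ) < (fun k => 0 * alphaV i k
            + ((p : ℤ) - (0 * c a j i + (p : ℤ) * c a j j + (q : ℤ) * c a j i)) * alphaV j k
            + (q : ℤ) * alphaV i k) i := by
          simp [alphaV, hij.symm, hij]
          omega
        have := pos_all hRS hw hwi j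
        simp [alphaV, hij, hij.symm, hCS.M1diag a j, hji] at this
        omega
    · intro hv
      rcases hv with rfl | rfl
      · exact ⟨alphaV_mem hRS a j, 1, 0, by funext k; simp⟩
      · exact ⟨alphaV_mem hRS a i, 0, 1, by funext k; simp⟩
  have hfin : (coneIJ (R a) j i).Finite := by
    rw [hcone]; exact (Set.finite_singleton _).insert _
  have hcard : (coneIJ (R a) j i).ncard = 2 := by
    rw [hcone]; exact Set.ncard_pair haij.symm
  have h4 := hRS.R4 a j i hij.symm hfin
  rw [hcard] at h4
  simp only [Function.iterate_succ, Function.iterate_zero, Function.comp_apply, id_eq] at h4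
  have := congrArg (ρ j) h4
  rwa [hCS.C1 j] at this

/-- One-sided inequality. -/
lemma key (hCS : IsCartanScheme ρ c) (hRS : IsRootSystem ρ c R)
    (a : A) (i j : I) (hij : i ≠ j) (h0 : c a i j = 0)
    (l : I) (hli : l ≠ i) (hlj : l ≠ j) : c a j l ≤ c (ρ i a) j l := by
  have hji : c a j i = 0 := hCS.M2 a i j h0
  have hrel : ρ i (ρ j (ρ i a)) = ρ j a := rel_of_c0 hCS hRS a i j hij hji
  have hcomm : ρ j (ρ i a) = ρ i (ρ j a) := by
    have := congrArg (ρ i) hrel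
    rwa [hCS.C1 i] at this
  set b := ρ i a with hb
  -- entries of relevant rows
  have hbij : c b i j = 0 := by rw [hb, ← hCS.C2 a i j]; exact h0
  have hbji : c b j i = 0 := hCS.M2 b i j hbij
  have hjaji : c (ρ j a) j i = 0 := by rw [← hCS.C2 a j i]; exact hji
  have hjaij : c (ρ j a) i j = 0 := hCS.M2 (ρ j a) j i hjaji
  have hrowi : ∀ m, c (ρ j b) i m = c (ρ j a) i m := by
    intro m; rw [hcomm, ← hCS.C2 (ρ j a) i m]
  have hrowj : ∀ m, c (ρ j a) j m = c a j m := by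
    intro m; rw [← hCS.C2 a j m]
  -- the chain of roots
  have hv0 : (fun k => 1 * alphaV l k + 0 * alphaV i k + 0 * alphaV j k) ∈ R a := by
    have := alphaV_mem hRS a l
    convert this using 1
    funext k; ring
  have hv1 := mem_refl hRS hv0 i
  rw [reflMap_mid c a i 1 0 0 l j] at hv1
  have hv2 := mem_refl hRS hv1 j
  rw [reflMap_last c b j] at hv2
  have hv3 := mem_refl hRS hv2 i
  rw [reflMap_mid (c := c) (a := ρ j b) (i := i)] at hv3
  rw [hrel] at hv3
  have hv4 := mem_refl hRS hv3 j
  rw [reflMap_last (c := c) (a := ρ j a) (j := j), hCS.C1 j] at hv4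
  -- evaluate: the alpha_j coefficient must be nonnegative
  have ht := pos_all hRS hv4 (l := l) ?side j
  case side =>
    simp [alphaV, hli, hlj]
  simp only [alphaV, if_pos, if_neg (Ne.symm hlj), if_neg (Ne.symm hij), if_neg hli,
    if_neg hlj, if_neg hij] at ht
  simp only [hrowi, hrowj, hjaij, hCS.M1diag, hbji, hji] at ht
  have hll : (if (j:I) = j then (1:ℤ) else 0) = 1 := if_pos rfl
  simp [hll] at ht
  linarith

end aux

/-- if `c^a_{ij} = 0` then the `j`-th rows of `C^a` and `C^{ρ_i(a)}` agree. -/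
theorem stmt6 {I A : Type*} [DecidableEq I] [Fintype I] [Nonempty I] [Nonempty A]
    (ρ : I → A → A) (c : A → I → I → ℤ) (R : A → Set (I → ℤ))
    (hCS : IsCartanScheme ρ c) (hRS : IsRootSystem ρ c R)
    (a : A) (i j : I) (hij : i ≠ j) (h0 : c a i j = 0) :
    ∀ l : I, c a j l = c (ρ i a) j l := by
  intro l
  have hji : c a j i = 0 := hCS.M2 a i j h0
  have hbij : c (ρ i a) i j = 0 := by rw [← hCS.C2 a i j]; exact h0
  by_cases hli : l = i
  · rw [hli, hji, hCS.M2 (ρ i a) i j hbij]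
  by_cases hlj : l = j
  · rw [hlj, hCS.M1diag a j, hCS.M1diag (ρ i a) j]
  · refine le_antisymm (key hCS hRS a i j hij h0 l hli hlj) ?_
    have h2 := key hCS hRS (ρ i a) i j hij hbij l hli hlj
    rwa [hCS.C1 i a] at h2
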